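/- For every positive long root α ∈ Φ_lg ∩ Φ⁺: l(x_α) = (l(s_{α̃}) − l(s_α))/2 = ht∨(α̃) − ht∨(α), and l(x_{−α}) = (l(s_{α̃}) + l(s_α))/2 = ht∨(α̃) + ht∨(α) − 1. -/

import Mathlib

open scoped RealInnerProductSpace Classical

noncomputable section

variable {V : Type} [NormedAddCommGroup V] [InnerProductSpace ℝ V] [FiniteDimensional ℝ V]

/-- The orthogonal reflection of `V` in the hyperplane orthogonal to `α`
(the reflection `s_α` when `α` is a root). -/
def sref (α : V) : V ≃ₗᵢ[ℝ] V := Submodule.reflection (Submodule.span ℝ {α})ᗮ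

/-- The pairing `⟨β, γ∨⟩ = 2(β|γ)/(γ|γ)` of a vector with the coroot of `γ`. -/
def cpair (β γ : V) : ℝ := 2 * ⟪β, γ⟫ / ⟪γ, γ⟫

/-- An irreducible reduced (crystallographic) root system in the real inner product
space `V`, the inner product being invariant under the Weyl group (automatic, since
reflections are isometries), normalized so that the shortest roots have squared length `1`. -/
structure NRootSystem (V : Type) [NormedAddCommGroup V] [InnerProductSpace ℝ V]
    [FiniteDimensional ℝ V] where
  Φ : Finset V
  nonempty : Φ.Nonempty
  zero_not_mem : (0 : V) ∉ Φ
  span_eq_top : Submodule.span ℝ (Φ : Set V) = ⊤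
  reduced : ∀ α ∈ Φ, ∀ t : ℝ, t • α ∈ Φ → t = 1 ∨ t = -1
  pairing_int : ∀ α ∈ Φ, ∀ β ∈ Φ, ∃ n : ℤ, 2 * ⟪β, α⟫ = n * ⟪α, α⟫
  reflect_mem : ∀ α ∈ Φ, ∀ β ∈ Φ, sref α β ∈ Φ
  irreducible : ∀ S : Finset V, S ⊆ Φ → S.Nonempty → (Φ \ S).Nonempty →
    ∃ α ∈ S, ∃ β ∈ Φ \ S, ⟪α, β⟫ ≠ 0
  norm_one_le : ∀ α ∈ Φ, 1 ≤ ⟪α, α⟫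
  exists_norm_one : ∃ α ∈ Φ, ⟪α, α⟫ = 1

namespace NRootSystem

variable (R : NRootSystem V)

/-- `r`, the maximal squared length of a root. -/
def r : ℝ := R.Φ.sup' R.nonempty fun α => ⟪α, α⟫

/-- long roots -/
def IsLong (α : V) : Prop := α ∈ R.Φ ∧ ⟪α, α⟫ = R.r

/-- short roots -/
def IsShort (α : V) : Prop := α ∈ R.Φ ∧ ⟪α, α⟫ < R.r

/-- The Weyl group `W`, generated by the reflections in the roots. -/
def Weyl : Subgroup (V ≃ₗᵢ[ℝ] V) := Subgroup.closure (sref '' (R.Φ : Set V))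

end NRootSystem

/-- The standard parabolic subgroup `W_I` generated by the reflections in `I ⊆ Δ`. -/
def WeylP (I : Finset V) : Subgroup (V ≃ₗᵢ[ℝ] V) := Subgroup.closure (sref '' (I : Set V))

/-- A base (set of simple roots) `Δ` of the root system, together with the
integral coordinates `coeff γ α` of each root `γ` in the basis `Δ`; every root is a
nonnegative or a nonpositive integral combination of the simple roots. -/
structure Base {V : Type} [NormedAddCommGroup V] [InnerProductSpace ℝ V]
    [FiniteDimensional ℝ V] (R : NRootSystem V) where
  Δ : Finset V
  subset : Δ ⊆ R.Φ
  indep : LinearIndependent ℝ (fun a : {x : V // x ∈ Δ} => (a : V))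
  coeff : V → V → ℤ
  coeff_spec : ∀ γ ∈ R.Φ, γ = ∑ α ∈ Δ, (coeff γ α : ℝ) • α
  coeff_sign : ∀ γ ∈ R.Φ, (∀ α ∈ Δ, 0 ≤ coeff γ α) ∨ (∀ α ∈ Δ, coeff γ α ≤ 0)

namespace Base

variable {R : NRootSystem V} (B : Base R)

/-- positive roots -/
def IsPos (γ : V) : Prop := γ ∈ R.Φ ∧ ∀ α ∈ B.Δ, 0 ≤ B.coeff γ α

/-- negative roots -/
def IsNeg (γ : V) : Prop := γ ∈ R.Φ ∧ ∀ α ∈ B.Δ, B.coeff γ α ≤ 0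

/-- the height of a root -/
def ht (γ : V) : ℤ := ∑ α ∈ B.Δ, B.coeff γ α

/-- the dual height `ht∨ γ = ht (γ∨)`: the height of the coroot `γ∨ = 2γ/(γ|γ)`
with respect to the basis of simple coroots `α∨ = 2α/(α|α)`, `α ∈ Δ`. -/
def htv (γ : V) : ℝ := ∑ α ∈ B.Δ, (B.coeff γ α : ℝ) * ⟪α, α⟫ / ⟪γ, γ⟫

/-- The length of `w`: the minimal length of an expression of `w` as a product of
simple reflections. -/
def len (w : V ≃ₗᵢ[ℝ] V) : ℕ :=
  sInf {n | ∃ g : Fin n → V, (∀ i, g i ∈ B.Δ) ∧ w = (List.ofFn fun i => sref (g i)).prod}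

/-- `w` is the longest element of the subgroup `H`. -/
def IsLongest (H : Subgroup (V ≃ₗᵢ[ℝ] V)) (w : V ≃ₗᵢ[ℝ] V) : Prop :=
  w ∈ H ∧ ∀ u ∈ H, B.len u ≤ B.len w

/-- `X_I = {w ∈ W | w(Φ_I⁺) ⊆ Φ⁺}`, the set of minimal length coset
representatives of `W/W_I`. -/
def XI (I : Finset V) : Set (V ≃ₗᵢ[ℝ] V) :=
  {w | w ∈ R.Weyl ∧
    ∀ γ, γ ∈ R.Φ → γ ∈ Submodule.span ℝ (I : Set V) → B.IsPos γ → B.IsPos (w γ)}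

/-- `h` is the highest root. -/
def IsHighest (h : V) : Prop :=
  h ∈ R.Φ ∧ ∀ γ ∈ R.Φ, ∀ α ∈ B.Δ, B.coeff γ α ≤ B.coeff h α

/-- `Ĩ = {α ∈ Δ | (h|α) = 0}`, the simple roots orthogonal to the highest root `h`. -/
def Itil (h : V) : Finset V := B.Δ.filter fun α => ⟪h, α⟫ = 0

/-- The level `L(α)` of a long root `α`, where `h` is the highest root:
`L(α) = ht∨(h) − ht∨(α)` if `α > 0` and `L(α) = ht∨(h) − ht∨(α) − 1` if `α < 0`. -/
def level (h α : V) : ℝ :=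
  if B.IsPos α then B.htv h - B.htv α else B.htv h - B.htv α - 1

/-- The elementary step relation `β →_γ α` on long roots (`γ` a positive root):
`α = s_γ(β)` and `L(α) = L(β) + 1`. -/
def Step (h γ β α : V) : Prop :=
  R.IsLong β ∧ R.IsLong α ∧ B.IsPos γ ∧ α = sref γ β ∧
    B.level h α = B.level h β + 1

/-- `g` is the sequence of positive roots of a path
`β = β₀ →_{g 0} β₁ →_{g 1} ⋯ →_{g (n-1)} β_n = α` from `β` to `α`. -/
def IsPathWord (h : V) {n : ℕ} (g : Fin n → V) (β α : V) : Prop :=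
  ∃ c : Fin (n + 1) → V, c 0 = β ∧ c (Fin.last n) = α ∧
    ∀ i : Fin n, B.Step h (g i) (c i.castSucc) (c i.succ)

/-- a path all of whose steps use simple roots -/
def IsSimplePathWord (h : V) {n : ℕ} (g : Fin n → V) (β α : V) : Prop :=
  B.IsPathWord h g β α ∧ ∀ i, g i ∈ B.Δ

/-- there is a path from `β` to `α`, i.e. `α ⪯ β` -/
def HasPath (h β α : V) : Prop := ∃ (n : ℕ) (g : Fin n → V), B.IsPathWord h g β α

/-- there is a simple path from `β` to `α` -/
def HasSimplePath (h β α : V) : Prop :=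
  ∃ (n : ℕ) (g : Fin n → V), B.IsSimplePathWord h g β α

/-- The covering relation `w →_γ w'` for the Bruhat order:
`w' = s_γ w` and `l(w') = l(w) + 1`, for a positive root `γ`. -/
def BStep (γ : V) (w w' : V ≃ₗᵢ[ℝ] V) : Prop :=
  B.IsPos γ ∧ w' = sref γ * w ∧ B.len w' = B.len w + 1

/-- The Bruhat order on `W`: the reflexive–transitive closure of the covering
relations. -/
def bruhatLE : (V ≃ₗᵢ[ℝ] V) → (V ≃ₗᵢ[ℝ] V) → Prop :=
  Relation.ReflTransGen fun w w' => ∃ γ, B.BStep γ w w'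

/-- `x` is an element of `W` with `x(β) = α` of the minimal possible length
`|L(α) − L(β)|` (this is the element `x_{αβ}` when it exists). -/
def MinTake (h β α : V) (x : V ≃ₗᵢ[ℝ] V) : Prop :=
  x ∈ R.Weyl ∧ x β = α ∧ (B.len x : ℝ) = |B.level h α - B.level h β|

/-- `g` is a reduced expression of `x` as a product of simple reflections. -/
def IsReducedWord {n : ℕ} (g : Fin n → V) (x : V ≃ₗᵢ[ℝ] V) : Prop :=
  (∀ i, g i ∈ B.Δ) ∧ x = (List.ofFn fun i => sref (g i)).prod ∧ n = B.len x

/-- The depth of a positive root `β`: the minimal integer `k` such that there is an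
element `w` of `W` of length `k` with `w(β) < 0`. -/
def depth (β : V) : ℕ := sInf {n | ∃ w ∈ R.Weyl, B.len w = n ∧ B.IsNeg (w β)}

end Base

set_option linter.unusedSectionVars false

/-!
For a long root `γ` and a root `β ≠ ±γ` one has `⟨β, γ∨⟩ ∈ {-1, 0, 1}`, so a simple reflection
changes the level `L` of a long root by at most one and `|L(w γ) − L(γ)| ≤ l(w)` for all `w ∈ W`.
Conversely, walking from `α̃` to `α` or to `−α` through simple reflections that raise the level by
exactly one gives words of length `L(α) = ht∨(α̃) − ht∨(α)` and `L(−α) = ht∨(α̃) + ht∨(α) − 1`;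
they are therefore reduced, they stay in `X_Ĩ` at every step, and since an element of `X_Ĩ` is
determined by its value at `α̃` (the stabilizer of `α̃` is `W_Ĩ`), they represent `x_α` and
`x_{−α}`. Finally, `s_γ = s_β s_{s_β γ} s_β` gives by induction on the height a word for `s_γ` of
length at most `2 ht∨(γ) − 1 = L(−γ) − L(γ)`, again reduced by the level bound; applied to `γ = α`
and `γ = α̃` this yields the remaining identities.
-/

lemma sref_apply (α x : V) : sref α x = x - cpair x α • α := by
  rcases eq_or_ne α 0 with rfl | hα
  · simp [sref, cpair, Submodule.reflection_mem_subspace_eq_self]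
  · rw [sref, Submodule.reflection_orthogonal_apply, Submodule.reflection_singleton_apply]
    simp only [RCLike.ofReal_real_eq_id, id_eq]
    rw [← real_inner_self_eq_norm_sq, cpair, real_inner_comm, neg_sub, two_smul, ← add_smul,
      mul_div_assoc, two_mul]

lemma sref_self (α : V) : sref α α = -α :=
  Submodule.reflection_orthogonalComplement_singleton_eq_neg α

lemma sref_of_inner_eq_zero {α x : V} (h : ⟪x, α⟫ = 0) : sref α x = x := by
  simp [sref_apply, cpair, h]

lemma sref_sref (α x : V) : sref α (sref α x) = x :=
  Submodule.reflection_reflection _ x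

lemma sref_mul_self (α : V) : sref α * sref α = 1 :=
  Submodule.reflection_mul_reflection _

lemma sref_inv (α : V) : (sref α)⁻¹ = sref α :=
  Submodule.reflection_inv

lemma sref_neg (α : V) : sref (-α) = sref α := by
  simp only [sref, ← Set.neg_singleton, Submodule.span_neg]

lemma inner_sref_self (α x : V) : ⟪sref α x, α⟫ = -⟪x, α⟫ := by
  rw [← (sref α).inner_map_map, sref_sref, sref_self, inner_neg_right]

lemma sref_map (u : V ≃ₗᵢ[ℝ] V) (α : V) : sref (u α) = u * sref α * u⁻¹ := by
  ext x
  have hx : u (u⁻¹ x) = x := u.apply_symm_apply x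
  have hpair : cpair (u⁻¹ x) α = cpair x (u α) := by
    rw [cpair, cpair, ← u.inner_map_map, ← u.inner_map_map α, hx]
  simp only [LinearIsometryEquiv.coe_mul, Function.comp_apply, sref_apply, map_sub, map_smul,
    hx, hpair]

lemma sref_conj_sref (β γ : V) : sref β * sref (sref β γ) * sref β = sref γ := by
  rw [sref_map, sref_inv, ← mul_assoc, ← mul_assoc, sref_mul_self, one_mul, mul_assoc,
    sref_mul_self, mul_one]

def wordProd (l : List V) : V ≃ₗᵢ[ℝ] V := (l.map sref).prod

@[simp] lemma wordProd_nil : wordProd ([] : List V) = 1 := rfl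

@[simp] lemma wordProd_cons (β : V) (l : List V) : wordProd (β :: l) = sref β * wordProd l := by
  simp [wordProd]

@[simp] lemma wordProd_append (l₁ l₂ : List V) :
    wordProd (l₁ ++ l₂) = wordProd l₁ * wordProd l₂ := by
  simp [wordProd]

lemma wordProd_reverse (l : List V) : wordProd l.reverse = (wordProd l)⁻¹ := by
  induction l with
  | nil => simp
  | cons β l ih => simp [ih, sref_inv]

lemma wordProd_ofFn {n : ℕ} (g : Fin n → V) :
    (List.ofFn fun i => sref (g i)).prod = wordProd (List.ofFn g) := by
  rw [wordProd, List.map_ofFn]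
  rfl

lemma wordProd_apply_mem_span {I : Finset V} {l : List V} (hl : ∀ β ∈ l, β ∈ I) {v : V}
    (hv : v ∈ Submodule.span ℝ (I : Set V)) : wordProd l v ∈ Submodule.span ℝ (I : Set V) := by
  induction l with
  | nil => exact hv
  | cons β l ih =>
    simp only [List.forall_mem_cons] at hl
    simp only [wordProd_cons, LinearIsometryEquiv.coe_mul, Function.comp_apply, sref_apply]
    exact sub_mem (ih hl.2) (Submodule.smul_mem _ _ (Submodule.subset_span hl.1))

namespace NRootSystem

variable {R : NRootSystem V} {β γ : V} {l : List V}

lemma ne_zero_of_mem (hγ : γ ∈ R.Φ) : γ ≠ 0 := fun h => R.zero_not_mem (h ▸ hγ)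

lemma inner_self_pos (hγ : γ ∈ R.Φ) : 0 < ⟪γ, γ⟫ := by
  linarith [R.norm_one_le γ hγ]

lemma neg_mem (hγ : γ ∈ R.Φ) : -γ ∈ R.Φ := by
  simpa [sref_self] using R.reflect_mem γ hγ γ hγ

lemma inner_self_le_r (hγ : γ ∈ R.Φ) : ⟪γ, γ⟫ ≤ R.r :=
  Finset.le_sup' (fun α => ⟪α, α⟫) hγ

lemma IsLong.reflect (hβ : β ∈ R.Φ) (hγ : R.IsLong γ) : R.IsLong (sref β γ) :=
  ⟨R.reflect_mem β hβ γ hγ.1, by rw [LinearIsometryEquiv.inner_map_map, hγ.2]⟩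

lemma exists_int_cpair (hβ : β ∈ R.Φ) (hγ : γ ∈ R.Φ) : ∃ n : ℤ, cpair β γ = n := by
  obtain ⟨n, hn⟩ := R.pairing_int γ hγ β hβ
  exact ⟨n, by rw [cpair, hn, mul_div_cancel_right₀ _ (inner_self_pos hγ).ne']⟩

lemma one_le_cpair (hβ : β ∈ R.Φ) (hγ : γ ∈ R.Φ) (hpos : 0 < ⟪β, γ⟫) : 1 ≤ cpair β γ := by
  obtain ⟨n, hn⟩ := exists_int_cpair hβ hγ
  have : (0 : ℝ) < n := hn ▸ div_pos (by linarith) (inner_self_pos hγ)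
  rw [hn]
  exact_mod_cast (show (0 : ℤ) < n by exact_mod_cast this)

lemma sq_inner_lt (hβ : β ∈ R.Φ) (hγ : γ ∈ R.Φ) (hne : β ≠ γ) (hne' : β ≠ -γ) :
    ⟪β, γ⟫ ^ 2 < ⟪β, β⟫ * ⟪γ, γ⟫ := by
  have hlt : |⟪β, γ⟫| < ‖β‖ * ‖γ‖ := by
    refine (abs_real_inner_le_norm β γ).lt_of_ne fun heq => ?_
    obtain ⟨t, -, ht⟩ := (norm_inner_eq_norm_iff (𝕜 := ℝ) (ne_zero_of_mem hβ)
      (ne_zero_of_mem hγ)).1 (by rwa [Real.norm_eq_abs])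
    rcases R.reduced β hβ t (ht ▸ hγ) with rfl | rfl
    · exact hne (by simpa using ht.symm)
    · exact hne' (by simp [ht])
  calc ⟪β, γ⟫ ^ 2 = |⟪β, γ⟫| ^ 2 := (sq_abs _).symm
    _ < (‖β‖ * ‖γ‖) ^ 2 := by gcongr
    _ = ⟪β, β⟫ * ⟪γ, γ⟫ := by rw [mul_pow, real_inner_self_eq_norm_sq, real_inner_self_eq_norm_sq]

/-- By strict Cauchy–Schwarz, `⟨β, γ∨⟩ ^ 2 < 4 ⟪β, β⟫ / ⟪γ, γ⟫ ≤ 4`. -/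
lemma cpair_eq_of_isLong (hβ : β ∈ R.Φ) (hγ : R.IsLong γ) (hne : β ≠ γ) (hne' : β ≠ -γ) :
    cpair β γ = -1 ∨ cpair β γ = 0 ∨ cpair β γ = 1 := by
  obtain ⟨n, hn⟩ := exists_int_cpair hβ hγ.1
  have hγγ := inner_self_pos hγ.1
  have hsq : (n : ℝ) ^ 2 < 4 := by
    have hββ : ⟪β, β⟫ ≤ ⟪γ, γ⟫ := hγ.2 ▸ inner_self_le_r hβ
    have hlt := sq_inner_lt hβ hγ.1 hne hne'
    rw [← hn, cpair, div_pow, div_lt_iff₀ (by positivity)]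
    nlinarith
  have : n ^ 2 < 4 := by exact_mod_cast hsq
  have : -1 ≤ n ∧ n ≤ 1 := by constructor <;> nlinarith
  rcases (by omega : n = -1 ∨ n = 0 ∨ n = 1) with rfl | rfl | rfl <;> simp [hn]

lemma cpair_eq_one_of_isLong (hβ : β ∈ R.Φ) (hγ : R.IsLong γ) (hne : β ≠ γ)
    (hpos : 0 < ⟪β, γ⟫) : cpair β γ = 1 := by
  have hne' : β ≠ -γ := by
    rintro rfl
    rw [inner_neg_left] at hpos
    linarith [inner_self_pos hγ.1]
  have : 0 < cpair β γ := div_pos (by linarith) (inner_self_pos hγ.1)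
  rcases cpair_eq_of_isLong hβ hγ hne hne' with h | h | h <;> rw [h] at this ⊢ <;> norm_num at this

lemma cpair_eq_neg_one_of_isLong (hβ : β ∈ R.Φ) (hγ : R.IsLong γ) (hne' : β ≠ -γ)
    (hneg : ⟪β, γ⟫ < 0) : cpair β γ = -1 := by
  have hne : β ≠ γ := by
    rintro rfl
    linarith [inner_self_pos hγ.1]
  have : cpair β γ < 0 := div_neg_of_neg_of_pos (by linarith) (inner_self_pos hγ.1)
  rcases cpair_eq_of_isLong hβ hγ hne hne' with h | h | h <;> rw [h] at this ⊢ <;> norm_num at this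

lemma sref_mem_weyl (hβ : β ∈ R.Φ) : sref β ∈ R.Weyl :=
  Subgroup.subset_closure ⟨β, hβ, rfl⟩

lemma wordProd_apply_mem (hl : ∀ β ∈ l, β ∈ R.Φ) (hγ : γ ∈ R.Φ) :
    wordProd l γ ∈ R.Φ := by
  induction l with
  | nil => exact hγ
  | cons β l ih =>
    simp only [List.forall_mem_cons] at hl
    exact R.reflect_mem β hl.1 _ (ih hl.2)

lemma IsLong.wordProd (hl : ∀ β ∈ l, β ∈ R.Φ) (hγ : R.IsLong γ) :
    R.IsLong (_root_.wordProd l γ) :=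
  ⟨wordProd_apply_mem hl hγ.1, by rw [LinearIsometryEquiv.inner_map_map, hγ.2]⟩

end NRootSystem

namespace Base

open NRootSystem

variable {R : NRootSystem V} (B : Base R) {h α β γ : V} {l : List V}

lemma coeff_eq_of_eq_sum (hγ : γ ∈ R.Φ) {c : V → ℝ} (hc : γ = ∑ α ∈ B.Δ, c α • α)
    (hα : α ∈ B.Δ) : (B.coeff γ α : ℝ) = c α := by
  have hzero : ∑ a ∈ B.Δ.attach, ((B.coeff γ a : ℝ) - c a) • (a : V) = 0 := by
    rw [Finset.sum_attach B.Δ fun a => ((B.coeff γ a : ℝ) - c a) • a]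
    simp only [sub_smul, Finset.sum_sub_distrib, ← B.coeff_spec γ hγ, ← hc, sub_self]
  have := linearIndependent_iff'.1 B.indep B.Δ.attach _ hzero ⟨α, hα⟩ (Finset.mem_attach _ _)
  exact sub_eq_zero.1 this

lemma coeff_of_mem (hβ : β ∈ B.Δ) (hα : α ∈ B.Δ) : B.coeff β α = if α = β then 1 else 0 := by
  have := B.coeff_eq_of_eq_sum (B.subset hβ) (c := fun α => if α = β then 1 else 0)
    (by simp [ite_smul, hβ]) hα
  split_ifs at this ⊢ <;> exact_mod_cast this

lemma coeff_neg (hγ : γ ∈ R.Φ) (hα : α ∈ B.Δ) : B.coeff (-γ) α = -B.coeff γ α := by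
  have := B.coeff_eq_of_eq_sum (neg_mem hγ) (c := fun α => -(B.coeff γ α : ℝ))
    (by simp only [neg_smul, Finset.sum_neg_distrib, ← B.coeff_spec γ hγ]) hα
  exact_mod_cast this

lemma coeff_sref (hβ : β ∈ B.Δ) (hγ : γ ∈ R.Φ) (hα : α ∈ B.Δ) :
    (B.coeff (sref β γ) α : ℝ) = B.coeff γ α - if α = β then cpair γ β else 0 :=
  B.coeff_eq_of_eq_sum (R.reflect_mem β (B.subset hβ) γ hγ)
    (c := fun α => B.coeff γ α - if α = β then cpair γ β else 0)
    (by simp only [sub_smul, ite_smul, zero_smul, Finset.sum_sub_distrib, ← B.coeff_spec γ hγ,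
      Finset.sum_ite_eq', if_pos hβ, sref_apply]) hα

lemma inner_eq_sum (hγ : γ ∈ R.Φ) (u : V) :
    ⟪u, γ⟫ = ∑ α ∈ B.Δ, (B.coeff γ α : ℝ) * ⟪u, α⟫ := by
  conv_lhs => rw [B.coeff_spec γ hγ]
  simp only [inner_sum, real_inner_smul_right]

lemma isPos_or_isNeg (hγ : γ ∈ R.Φ) : B.IsPos γ ∨ B.IsNeg γ :=
  (B.coeff_sign γ hγ).imp (⟨hγ, ·⟩) (⟨hγ, ·⟩)

lemma IsPos.not_isNeg (hpos : B.IsPos γ) : ¬B.IsNeg γ := fun hneg => by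
  have : γ = 0 := by
    rw [B.coeff_spec γ hpos.1]
    refine Finset.sum_eq_zero fun α hα => ?_
    rw [le_antisymm (hneg.2 α hα) (hpos.2 α hα), Int.cast_zero, zero_smul]
  exact ne_zero_of_mem hpos.1 this

lemma isNeg_of_not_isPos (hγ : γ ∈ R.Φ) (h : ¬B.IsPos γ) : B.IsNeg γ :=
  (B.isPos_or_isNeg hγ).resolve_left h

lemma IsPos.neg (hpos : B.IsPos γ) : B.IsNeg (-γ) :=
  ⟨neg_mem hpos.1, fun α hα => by simpa [B.coeff_neg hpos.1 hα] using hpos.2 α hα⟩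

lemma IsNeg.neg (hneg : B.IsNeg γ) : B.IsPos (-γ) :=
  ⟨neg_mem hneg.1, fun α hα => by simpa [B.coeff_neg hneg.1 hα] using hneg.2 α hα⟩

lemma isPos_of_mem (hβ : β ∈ B.Δ) : B.IsPos β :=
  ⟨B.subset hβ, fun α hα => by rw [B.coeff_of_mem hβ hα]; split_ifs <;> simp⟩

lemma ht_sref (hβ : β ∈ B.Δ) (hγ : γ ∈ R.Φ) :
    (B.ht (sref β γ) : ℝ) = B.ht γ - cpair γ β := by
  simp only [ht, Int.cast_sum]
  rw [Finset.sum_congr rfl fun α hα => B.coeff_sref hβ hγ hα, Finset.sum_sub_distrib,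
    Finset.sum_ite_eq', if_pos hβ]

lemma IsPos.one_le_ht (hpos : B.IsPos γ) : 1 ≤ B.ht γ := by
  refine Finset.sum_pos' hpos.2 ?_
  by_contra! hzero
  refine ne_zero_of_mem hpos.1 ?_
  rw [B.coeff_spec γ hpos.1]
  refine Finset.sum_eq_zero fun α hα => ?_
  rw [le_antisymm (hzero α hα) (hpos.2 α hα), Int.cast_zero, zero_smul]

lemma ht_le_ht_of_isHighest (hh : B.IsHighest h) (hγ : γ ∈ R.Φ) : B.ht γ ≤ B.ht h :=
  Finset.sum_le_sum fun α hα => hh.2 γ hγ α hα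

lemma htv_of_mem (hβ : β ∈ B.Δ) : B.htv β = 1 := by
  rw [htv, Finset.sum_eq_single_of_mem β hβ fun α hα hαβ => by simp [B.coeff_of_mem hβ hα, hαβ],
    B.coeff_of_mem hβ hβ, if_pos rfl, Int.cast_one, one_mul,
    div_self (inner_self_pos (B.subset hβ)).ne']

lemma htv_neg (hγ : γ ∈ R.Φ) : B.htv (-γ) = -B.htv γ := by
  simp only [htv, ← Finset.sum_neg_distrib, inner_neg_neg]
  refine Finset.sum_congr rfl fun α hα => ?_
  rw [B.coeff_neg hγ hα, Int.cast_neg, neg_mul, neg_div]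

lemma htv_sref (hβ : β ∈ B.Δ) (hγ : γ ∈ R.Φ) : B.htv (sref β γ) = B.htv γ - cpair β γ := by
  have hγγ := (inner_self_pos hγ).ne'
  have hββ := (inner_self_pos (B.subset hβ)).ne'
  simp only [htv, LinearIsometryEquiv.inner_map_map]
  rw [Finset.sum_congr rfl fun α hα => by rw [B.coeff_sref hβ hγ hα, sub_mul, sub_div],
    Finset.sum_sub_distrib]
  simp only [ite_mul, zero_mul, ite_div, zero_div, Finset.sum_ite_eq', if_pos hβ, cpair,
    real_inner_comm β]
  field_simp

lemma IsPos.sref_of_ne (hβ : β ∈ B.Δ) (hpos : B.IsPos γ) (hne : γ ≠ β) : B.IsPos (sref β γ) := by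
  have hcoeff : ∀ α ∈ B.Δ, α ≠ β → B.coeff (sref β γ) α = B.coeff γ α := fun α hα hαβ => by
    have := B.coeff_sref hβ hpos.1 hα
    rw [if_neg hαβ, sub_zero] at this
    exact_mod_cast this
  refine (B.isPos_or_isNeg (R.reflect_mem β (B.subset hβ) γ hpos.1)).resolve_right
    fun hneg => ?_
  have hsupp : ∀ α ∈ B.Δ, α ≠ β → B.coeff γ α = 0 := fun α hα hαβ =>
    le_antisymm (hcoeff α hα hαβ ▸ hneg.2 α hα) (hpos.2 α hα)
  have hγ : γ = (B.coeff γ β : ℝ) • β := by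
    conv_lhs => rw [B.coeff_spec γ hpos.1]
    refine Finset.sum_eq_single_of_mem β hβ fun α hα hαβ => ?_
    rw [hsupp α hα hαβ, Int.cast_zero, zero_smul]
  rcases R.reduced β (B.subset hβ) _ (hγ ▸ hpos.1) with h1 | h1
  · exact hne (by rw [hγ, h1, one_smul])
  · rw [h1, neg_one_smul] at hγ
    exact (hγ ▸ hpos).not_isNeg B (B.isPos_of_mem hβ).neg

lemma IsNeg.sref_of_ne_neg (hβ : β ∈ B.Δ) (hneg : B.IsNeg γ) (hne : γ ≠ -β) :
    B.IsNeg (sref β γ) := by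
  simpa using (hneg.neg.sref_of_ne B hβ fun h => hne (neg_eq_iff_eq_neg.1 h)).neg

lemma IsPos.exists_inner_pos (hpos : B.IsPos γ) : ∃ β ∈ B.Δ, 0 < ⟪γ, β⟫ := by
  by_contra! hnonpos
  have := inner_self_pos hpos.1
  rw [B.inner_eq_sum hpos.1] at this
  exact this.not_ge (Finset.sum_nonpos fun α hα =>
    mul_nonpos_of_nonneg_of_nonpos (by exact_mod_cast hpos.2 α hα) (hnonpos α hα))

lemma IsPos.exists_sref_ht_lt (hpos : B.IsPos γ) (hγ : γ ∉ B.Δ) :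
    ∃ β ∈ B.Δ, 0 < ⟪γ, β⟫ ∧ B.IsPos (sref β γ) ∧ B.ht (sref β γ) < B.ht γ := by
  obtain ⟨β, hβ, hγβ⟩ := hpos.exists_inner_pos B
  refine ⟨β, hβ, hγβ, hpos.sref_of_ne B hβ fun h => hγ (h ▸ hβ), ?_⟩
  have := B.ht_sref hβ hpos.1
  have := one_le_cpair hpos.1 (B.subset hβ) hγβ
  exact_mod_cast (by linarith : (B.ht (sref β γ) : ℝ) < B.ht γ)

lemma level_of_isPos (hpos : B.IsPos γ) : B.level h γ = B.htv h - B.htv γ := if_pos hpos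

lemma level_of_isNeg (hneg : B.IsNeg γ) : B.level h γ = B.htv h - B.htv γ - 1 :=
  if_neg fun hpos => hpos.not_isNeg B hneg

lemma level_neg_of_isPos (hpos : B.IsPos γ) : B.level h (-γ) = B.htv h + B.htv γ - 1 := by
  rw [B.level_of_isNeg hpos.neg, B.htv_neg hpos.1]
  ring

lemma abs_level_sref_sub_le (h : V) (hβ : β ∈ B.Δ) (hγ : R.IsLong γ) :
    |B.level h (sref β γ) - B.level h γ| ≤ 1 := by
  have hβpos := B.isPos_of_mem hβ
  have hβneg := hβpos.neg
  by_cases hγβ : γ = β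
  · subst hγβ
    rw [sref_self, B.level_of_isNeg hβneg, B.level_of_isPos hβpos, B.htv_neg hγ.1,
      B.htv_of_mem hβ]
    norm_num
  by_cases hγβ' : γ = -β
  · subst hγβ'
    rw [map_neg, sref_self, neg_neg, B.level_of_isNeg hβneg, B.level_of_isPos hβpos,
      B.htv_neg hβpos.1, B.htv_of_mem hβ]
    norm_num
  have hlevel : B.level h (sref β γ) - B.level h γ = cpair β γ := by
    rcases B.isPos_or_isNeg hγ.1 with hpos | hneg
    · rw [B.level_of_isPos (hpos.sref_of_ne B hβ hγβ), B.level_of_isPos hpos, B.htv_sref hβ hγ.1]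
      ring
    · rw [B.level_of_isNeg (hneg.sref_of_ne_neg B hβ hγβ'), B.level_of_isNeg hneg,
        B.htv_sref hβ hγ.1]
      ring
  rw [hlevel, abs_le]
  rcases cpair_eq_of_isLong (B.subset hβ) hγ (Ne.symm hγβ) (fun h => hγβ' (by rw [h, neg_neg]))
    with h | h | h <;> rw [h] <;> norm_num

lemma abs_level_wordProd_sub_le (h : V) (hl : ∀ β ∈ l, β ∈ B.Δ) (hγ : R.IsLong γ) :
    |B.level h (wordProd l γ) - B.level h γ| ≤ l.length := by
  induction l with
  | nil => simp
  | cons β l ih =>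
    simp only [List.forall_mem_cons] at hl
    have hstep := B.abs_level_sref_sub_le h hl.1 (hγ.wordProd fun β hβ => B.subset (hl.2 β hβ))
    simp only [wordProd_cons, LinearIsometryEquiv.coe_mul, Function.comp_apply,
      List.length_cons, Nat.cast_succ]
    linarith [abs_sub_le (B.level h (sref β (wordProd l γ))) (B.level h (wordProd l γ))
      (B.level h γ), ih hl.2]

lemma len_le_length (hl : ∀ β ∈ l, β ∈ B.Δ) : B.len (wordProd l) ≤ l.length :=
  Nat.sInf_le ⟨l.get, fun i => hl _ (l.get_mem i), by rw [wordProd_ofFn, List.ofFn_get]⟩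

lemma exists_length_eq_len (hl : ∀ β ∈ l, β ∈ B.Δ) :
    ∃ l', (∀ β ∈ l', β ∈ B.Δ) ∧ wordProd l' = wordProd l ∧ l'.length = B.len (wordProd l) := by
  obtain ⟨g, hg, hgl⟩ := Nat.sInf_mem (s := {n | ∃ g : Fin n → V, (∀ i, g i ∈ B.Δ) ∧
    wordProd l = (List.ofFn fun i => sref (g i)).prod})
    ⟨_, l.get, fun i => hl _ (l.get_mem i), by rw [wordProd_ofFn, List.ofFn_get]⟩
  refine ⟨List.ofFn g, ?_, (wordProd_ofFn g).symm.trans hgl.symm, List.length_ofFn⟩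
  simpa [List.mem_ofFn] using hg

lemma len_eq_of_word (h : V) (hl : ∀ β ∈ l, β ∈ B.Δ) {w : V ≃ₗᵢ[ℝ] V} (hw : wordProd l = w)
    (hγ : R.IsLong γ) {c : ℝ} (hc : B.level h (w γ) - B.level h γ = c)
    (hlen : (l.length : ℝ) ≤ c) : (B.len w : ℝ) = c := by
  subst hw
  obtain ⟨l', hl', hl'l, hlen'⟩ := B.exists_length_eq_len hl
  have hlower := B.abs_level_wordProd_sub_le h hl' hγ
  rw [hl'l, hlen', hc] at hlower
  have hupper : (B.len (wordProd l) : ℝ) ≤ l.length := by exact_mod_cast B.len_le_length hl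
  linarith [le_abs_self c]

lemma IsPos.exists_word_sref {γ : V} (hpos : B.IsPos γ) :
    ∃ l, (∀ β ∈ l, β ∈ B.Δ) ∧ wordProd l = sref γ ∧ (l.length : ℝ) ≤ 2 * B.htv γ - 1 := by
  by_cases hγ : γ ∈ B.Δ
  · exact ⟨[γ], by simpa using hγ, by simp, by norm_num [B.htv_of_mem hγ]⟩
  obtain ⟨β, hβ, hγβ, hpos', hlt⟩ := hpos.exists_sref_ht_lt B hγ
  have hht_pos := hpos'.one_le_ht B
  obtain ⟨l, hl, hlw, hlen⟩ := hpos'.exists_word_sref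
  refine ⟨β :: l ++ [β], ?_, by simp [hlw, ← mul_assoc, sref_conj_sref], ?_⟩
  · simp only [List.cons_append, List.forall_mem_cons, List.forall_mem_append]
    exact ⟨hβ, hl, by simpa using hβ⟩
  have hcpair := one_le_cpair (B.subset hβ) hpos.1 (real_inner_comm γ β ▸ hγβ)
  rw [B.htv_sref hβ hpos.1] at hlen
  simp only [List.cons_append, List.length_cons, List.length_append, List.length_nil]
  push_cast
  linarith
termination_by (B.ht γ).toNat
decreasing_by omega

lemma exists_word_of_mem_weyl {w : V ≃ₗᵢ[ℝ] V} (hw : w ∈ R.Weyl) :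
    ∃ l, (∀ β ∈ l, β ∈ B.Δ) ∧ wordProd l = w := by
  induction hw using Subgroup.closure_induction with
  | mem _ hs =>
    obtain ⟨γ, hγ, rfl⟩ := hs
    rcases B.isPos_or_isNeg hγ with hpos | hneg
    · obtain ⟨l, hl, hlw, -⟩ := hpos.exists_word_sref B
      exact ⟨l, hl, hlw⟩
    · obtain ⟨l, hl, hlw, -⟩ := hneg.neg.exists_word_sref B
      exact ⟨l, hl, by rw [hlw, sref_neg]⟩
  | one => exact ⟨[], by simp, rfl⟩
  | mul _ _ _ _ ihu ihv =>
    obtain ⟨l₁, hl₁, rfl⟩ := ihu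
    obtain ⟨l₂, hl₂, rfl⟩ := ihv
    exact ⟨l₁ ++ l₂, List.forall_mem_append.2 ⟨hl₁, hl₂⟩, wordProd_append l₁ l₂⟩
  | inv _ _ ih =>
    obtain ⟨l, hl, rfl⟩ := ih
    exact ⟨l.reverse, by simpa using hl, wordProd_reverse l⟩

/-- The deletion condition of Coxeter groups. -/
lemma exists_word_eq_mul_sref {S : Finset V} (hS : S ⊆ B.Δ) (hl : ∀ β ∈ l, β ∈ S)
    {δ : V} (hδ : B.IsPos δ) (hneg : ¬B.IsPos (wordProd l δ)) :
    ∃ l', (∀ β ∈ l', β ∈ S) ∧ l'.length + 1 = l.length ∧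
      wordProd l' = wordProd l * sref δ := by
  induction l with
  | nil => exact absurd hδ hneg
  | cons β t ih =>
    simp only [List.forall_mem_cons] at hl
    by_cases ht : B.IsPos (wordProd t δ)
    · have htδ : wordProd t δ = β := by
        by_contra hne
        exact hneg (ht.sref_of_ne B (hS hl.1) hne)
      refine ⟨t, hl.2, rfl, ?_⟩
      rw [wordProd_cons, ← htδ, sref_map, mul_assoc, mul_assoc, inv_mul_cancel_left, mul_assoc,
        sref_mul_self, mul_one]
    · obtain ⟨l', hl', hlen, hl'w⟩ := ih hl.2 ht
      exact ⟨β :: l', List.forall_mem_cons.2 ⟨hl.1, hl'⟩, by simp [hlen], by simp [hl'w, mul_assoc]⟩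

lemma eq_one_of_forall_isPos {S : Finset V} (hS : S ⊆ B.Δ) {l : List V} (hl : ∀ β ∈ l, β ∈ S)
    (hpos : ∀ β ∈ S, B.IsPos (wordProd l β)) : wordProd l = 1 := by
  rcases l.eq_nil_or_concat with rfl | ⟨t, δ, rfl⟩
  · rfl
  simp only [List.concat_eq_append, List.forall_mem_append, List.forall_mem_singleton] at hl hpos ⊢
  have hδ := B.isPos_of_mem (hS hl.2)
  have hneg : ¬B.IsPos (wordProd t δ) := fun ht => by
    have := hpos δ hl.2
    simp only [wordProd_append, wordProd_cons, wordProd_nil, mul_one,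
      LinearIsometryEquiv.coe_mul, Function.comp_apply, sref_self, map_neg] at this
    exact this.not_isNeg B ht.neg
  obtain ⟨l', hl', hlen, hl'w⟩ := B.exists_word_eq_mul_sref hS hl.1 hδ hneg
  have hl'w : wordProd l' = wordProd (t ++ [δ]) := by simp [hl'w]
  rw [← hl'w]
  exact eq_one_of_forall_isPos hS hl' (hl'w ▸ hpos)
termination_by l.length
decreasing_by
  subst_vars
  simp only [List.concat_eq_append, List.length_append, List.length_singleton]
  omega

lemma IsHighest.isPos (hh : B.IsHighest h) : B.IsPos h :=
  ⟨hh.1, fun α hα => by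
    have := hh.2 α (B.subset hα) α hα
    rw [B.coeff_of_mem hα hα, if_pos rfl] at this
    omega⟩

lemma IsHighest.inner_nonneg (hh : B.IsHighest h) (hβ : β ∈ B.Δ) : 0 ≤ ⟪h, β⟫ := by
  have hle : (B.coeff (sref β h) β : ℝ) ≤ B.coeff h β := by
    exact_mod_cast hh.2 _ (R.reflect_mem β (B.subset hβ) h hh.1) β hβ
  rw [B.coeff_sref hβ hh.1 hβ, if_pos rfl, sub_le_self_iff, cpair] at hle
  have hββ := inner_self_pos (B.subset hβ)
  have := mul_nonneg hle hββ.le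
  rw [div_mul_cancel₀ _ hββ.ne'] at this
  linarith

lemma inner_nonpos_of_isNeg {u : V} (hu : ∀ β ∈ B.Δ, 0 ≤ ⟪u, β⟫) (hγ : B.IsNeg γ) :
    ⟪u, γ⟫ ≤ 0 := by
  rw [B.inner_eq_sum hγ.1]
  exact Finset.sum_nonpos fun α hα =>
    mul_nonpos_of_nonpos_of_nonneg (by exact_mod_cast hγ.2 α hα) (hu α hα)

lemma mem_Itil : β ∈ B.Itil h ↔ β ∈ B.Δ ∧ ⟪h, β⟫ = 0 := Finset.mem_filter

lemma Itil_subset : B.Itil h ⊆ B.Δ := Finset.filter_subset _ _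

lemma inner_eq_zero_of_mem_span_Itil {v : V} (hv : v ∈ Submodule.span ℝ (B.Itil h : Set V)) :
    ⟪v, h⟫ = 0 := by
  induction hv using Submodule.span_induction with
  | mem β hβ => rw [real_inner_comm, ((B.mem_Itil).1 hβ).2]
  | zero => exact inner_zero_left h
  | add u v _ _ hu hv => rw [inner_add_left, hu, hv, add_zero]
  | smul c v _ hv => rw [real_inner_smul_left, hv, mul_zero]

lemma IsHighest.exists_word_Itil (hh : B.IsHighest h) {l : List V} (hl : ∀ β ∈ l, β ∈ B.Δ)
    (hfix : wordProd l h = h) :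
    ∃ l', (∀ β ∈ l', β ∈ B.Itil h) ∧ wordProd l' = wordProd l := by
  by_cases hall : ∀ β ∈ B.Δ, B.IsPos (wordProd l β)
  · exact ⟨[], by simp, (B.eq_one_of_forall_isPos subset_rfl hl hall).symm⟩
  obtain ⟨β, hβ, hneg⟩ := not_forall₂.1 hall
  have hβh : ⟪h, β⟫ = 0 := by
    have hlβ := B.isNeg_of_not_isPos (wordProd_apply_mem (fun γ hγ => B.subset (hl γ hγ))
      (B.subset hβ)) hneg
    have := B.inner_nonpos_of_isNeg (fun _ => hh.inner_nonneg B) hlβ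
    rw [← hfix, LinearIsometryEquiv.inner_map_map] at this
    exact le_antisymm this (hh.inner_nonneg B hβ)
  obtain ⟨l', hl', hlen, hl'w⟩ := B.exists_word_eq_mul_sref subset_rfl hl (B.isPos_of_mem hβ) hneg
  have hfix' : wordProd l' h = h := by
    rw [hl'w, LinearIsometryEquiv.coe_mul, Function.comp_apply,
      sref_of_inner_eq_zero (real_inner_comm h β ▸ hβh), hfix]
  obtain ⟨l'', hl'', hl''w⟩ := hh.exists_word_Itil hl' hfix'
  refine ⟨l'' ++ [β], ?_, ?_⟩
  · simp only [List.forall_mem_append, List.forall_mem_singleton]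
    exact ⟨hl'', (B.mem_Itil).2 ⟨hβ, hβh⟩⟩
  · rw [wordProd_append, hl''w, hl'w, wordProd_cons, wordProd_nil, mul_one, mul_assoc,
      sref_mul_self, mul_one]
termination_by l.length
decreasing_by omega

theorem IsHighest.injOn_XI (hh : B.IsHighest h) :
    Set.InjOn (fun w : V ≃ₗᵢ[ℝ] V => w h) (B.XI (B.Itil h)) := by
  intro x hx y hy hxy
  obtain ⟨l₀, hl₀, hl₀u⟩ := B.exists_word_of_mem_weyl (mul_mem (inv_mem hy.1) hx.1)
  have hfix : wordProd l₀ h = h := by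
    rw [hl₀u, LinearIsometryEquiv.coe_mul, Function.comp_apply]
    exact (congrArg y.symm hxy).trans (y.symm_apply_apply h)
  obtain ⟨l, hl, hlu⟩ := hh.exists_word_Itil B hl₀ hfix
  have hxyl : x = y * wordProd l := by rw [hlu, hl₀u, mul_inv_cancel_left]
  rw [hxyl] at hx ⊢
  suffices wordProd l = 1 by rw [this, mul_one]
  refine B.eq_one_of_forall_isPos B.Itil_subset hl fun β hβ => by_contra fun hneg => ?_
  have hβspan : β ∈ Submodule.span ℝ (B.Itil h : Set V) := Submodule.subset_span hβ
  have hβΦ := B.subset (B.Itil_subset hβ)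
  have hlβ := wordProd_apply_mem (fun γ hγ => B.subset (B.Itil_subset (hl γ hγ))) hβΦ
  have hlβspan := wordProd_apply_mem_span hl hβspan
  have hxβ : B.IsPos (y (wordProd l β)) := hx.2 β hβΦ hβspan (B.isPos_of_mem (B.Itil_subset hβ))
  have hyβ : B.IsPos (y (-wordProd l β)) :=
    hy.2 _ (neg_mem hlβ) (neg_mem hlβspan) (B.isNeg_of_not_isPos hlβ hneg).neg
  rw [map_neg] at hyβ
  exact hxβ.not_isNeg B (by simpa using hyβ.neg)

lemma IsHighest.eq_of_inner_nonneg (hh : B.IsHighest h) (hα : α ∈ R.Φ)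
    (hαh : ⟪α, α⟫ = ⟪h, h⟫) (hdom : ∀ β ∈ B.Δ, 0 ≤ ⟪α, β⟫) : α = h := by
  have hle : ⟪α, α⟫ ≤ ⟪α, h⟫ := by
    rw [← sub_nonneg, B.inner_eq_sum hh.1, B.inner_eq_sum hα, ← Finset.sum_sub_distrib]
    refine Finset.sum_nonneg fun β hβ => ?_
    rw [← sub_mul]
    exact mul_nonneg (sub_nonneg.2 (by exact_mod_cast hh.2 α hα β hβ)) (hdom β hβ)
  have : ‖α - h‖ ^ 2 ≤ 0 := by
    rw [norm_sub_sq_real, ← real_inner_self_eq_norm_sq, ← real_inner_self_eq_norm_sq]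
    linarith
  exact sub_eq_zero.1 (norm_eq_zero.1 (pow_eq_zero_iff two_ne_zero |>.1
    (le_antisymm this (sq_nonneg _))))

/-- `s_β` only moves `β` among the positive roots, and `β` is not orthogonal to `w h`. -/
lemma sref_mul_mem_XI {w : V ≃ₗᵢ[ℝ] V} (hw : w ∈ B.XI (B.Itil h)) {β : V} (hβ : β ∈ B.Δ)
    (hwh : ⟪w h, β⟫ ≠ 0) : sref β * w ∈ B.XI (B.Itil h) := by
  refine ⟨mul_mem (sref_mem_weyl (B.subset hβ)) hw.1, fun γ hγ hγspan hpos => ?_⟩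
  refine (hw.2 γ hγ hγspan hpos).sref_of_ne B hβ fun hwγ => hwh ?_
  rw [← hwγ, real_inner_comm]
  exact (w.inner_map_map γ h).trans (B.inner_eq_zero_of_mem_span_Itil hγspan)

lemma IsHighest.exists_word_XI_apply_eq (hh : B.IsHighest h) (hhl : R.IsLong h) {α : V}
    (hα : R.IsLong α) (hpos : B.IsPos α) :
    ∃ l, (∀ β ∈ l, β ∈ B.Δ) ∧ wordProd l ∈ B.XI (B.Itil h) ∧ wordProd l h = α ∧
      (l.length : ℝ) = B.htv h - B.htv α := by
  by_cases hαh : α = h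
  · subst hαh
    exact ⟨[], by simp, ⟨one_mem _, fun _ _ _ hγ => hγ⟩, rfl, by simp⟩
  obtain ⟨β, hβ, hαβ⟩ : ∃ β ∈ B.Δ, ⟪α, β⟫ < 0 := by
    by_contra! hdom
    exact hαh (hh.eq_of_inner_nonneg B hα.1 (hα.2.trans hhl.2.symm) hdom)
  have hne : α ≠ β := by
    rintro rfl
    linarith [inner_self_pos hα.1]
  have hpos' := hpos.sref_of_ne B hβ hne
  have hcpair : cpair β α = -1 := cpair_eq_neg_one_of_isLong (B.subset hβ) hα
    (fun h => (B.isPos_of_mem hβ).not_isNeg B (h ▸ hpos.neg)) (real_inner_comm α β ▸ hαβ)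
  have hht : B.ht α < B.ht (sref β α) := by
    have : cpair α β < 0 := div_neg_of_neg_of_pos (by linarith) (inner_self_pos (B.subset hβ))
    have := B.ht_sref hβ hpos.1
    exact_mod_cast (by linarith : (B.ht α : ℝ) < B.ht (sref β α))
  have hht_le := B.ht_le_ht_of_isHighest hh hpos'.1
  obtain ⟨l, hl, hlXI, hlh, hllen⟩ :=
    hh.exists_word_XI_apply_eq hhl (hα.reflect (B.subset hβ)) hpos'
  refine ⟨β :: l, List.forall_mem_cons.2 ⟨hβ, hl⟩, B.sref_mul_mem_XI hlXI hβ ?_,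
    by simp [hlh, sref_sref], ?_⟩
  · rw [hlh, inner_sref_self]
    linarith
  · rw [List.length_cons, Nat.cast_succ, hllen, B.htv_sref hβ hpos.1, hcpair]
    ring
termination_by (B.ht h - B.ht α).toNat
decreasing_by omega

lemma IsHighest.exists_word_XI_apply_eq_neg (hh : B.IsHighest h) (hhl : R.IsLong h) {α : V}
    (hα : R.IsLong α) (hpos : B.IsPos α) :
    ∃ l, (∀ β ∈ l, β ∈ B.Δ) ∧ wordProd l ∈ B.XI (B.Itil h) ∧ wordProd l h = -α ∧
      (l.length : ℝ) = B.htv h + B.htv α - 1 := by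
  by_cases hαΔ : α ∈ B.Δ
  · obtain ⟨l, hl, hlXI, hlh, hllen⟩ := hh.exists_word_XI_apply_eq B hhl hα hpos
    refine ⟨α :: l, List.forall_mem_cons.2 ⟨hαΔ, hl⟩,
      B.sref_mul_mem_XI hlXI hαΔ (hlh ▸ (inner_self_pos hα.1).ne'), by simp [hlh, sref_self], ?_⟩
    rw [List.length_cons, Nat.cast_succ, hllen, B.htv_of_mem hαΔ]
    ring
  obtain ⟨β, hβ, hαβ, hpos', hlt⟩ := hpos.exists_sref_ht_lt B hαΔ
  have hht_pos := hpos'.one_le_ht B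
  have hcpair : cpair β α = 1 := cpair_eq_one_of_isLong (B.subset hβ) hα
    (fun h => hαΔ (h ▸ hβ)) (real_inner_comm α β ▸ hαβ)
  obtain ⟨l, hl, hlXI, hlh, hllen⟩ :=
    hh.exists_word_XI_apply_eq_neg hhl (hα.reflect (B.subset hβ)) hpos'
  refine ⟨β :: l, List.forall_mem_cons.2 ⟨hβ, hl⟩, B.sref_mul_mem_XI hlXI hβ ?_,
    by simp [hlh, sref_sref], ?_⟩
  · rw [hlh, inner_neg_left, inner_sref_self, neg_neg]
    exact hαβ.ne'
  · rw [List.length_cons, Nat.cast_succ, hllen, B.htv_sref hβ hpos.1, hcpair]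
    ring
termination_by (B.ht α).toNat
decreasing_by omega

end Base

/-- for every positive long root `α`:
`l(x_α) = (l(s_{α̃}) − l(s_α))/2 = ht∨(α̃) − ht∨(α)` and
`l(x_{−α}) = (l(s_{α̃}) + l(s_α))/2 = ht∨(α̃) + ht∨(α) − 1`. -/
theorem len_xa_and_len_x_neg (R : NRootSystem V) (B : Base R) {h : V}
    (hh : B.IsHighest h) {α : V} (hα : R.IsLong α) (hαpos : B.IsPos α)
    {x xm : V ≃ₗᵢ[ℝ] V} (hx : x ∈ B.XI (B.Itil h)) (hxα : x h = α)
    (hxm : xm ∈ B.XI (B.Itil h)) (hxmα : xm h = -α) :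
    2 * (B.len x : ℤ) = (B.len (sref h) : ℤ) - B.len (sref α) ∧
    (B.len x : ℝ) = B.htv h - B.htv α ∧
    2 * (B.len xm : ℤ) = (B.len (sref h) : ℤ) + B.len (sref α) ∧
    (B.len xm : ℝ) = B.htv h + B.htv α - 1 := by
  have hhl : R.IsLong h := ⟨hh.1, by rw [← x.inner_map_map, hxα, hα.2]⟩
  have hhpos := hh.isPos B
  have hLh : B.level h h = 0 := by rw [B.level_of_isPos hhpos, sub_self]
  obtain ⟨l, hl, hlXI, hlh, hllen⟩ := hh.exists_word_XI_apply_eq B hhl hα hαpos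
  obtain ⟨m, hm, hmXI, hmh, hmlen⟩ := hh.exists_word_XI_apply_eq_neg B hhl hα hαpos
  obtain ⟨s, hs, hsh, hslen⟩ := hhpos.exists_word_sref B
  obtain ⟨t, ht, htα, htlen⟩ := hαpos.exists_word_sref B
  have hlx : wordProd l = x := hh.injOn_XI B hlXI hx (hlh.trans hxα.symm)
  have hmxm : wordProd m = xm := hh.injOn_XI B hmXI hxm (hmh.trans hxmα.symm)
  have hlenx : (B.len x : ℝ) = B.htv h - B.htv α := B.len_eq_of_word h hl hlx hhl
    (by rw [hxα, hLh, B.level_of_isPos hαpos, sub_zero]) hllen.le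
  have hlenxm : (B.len xm : ℝ) = B.htv h + B.htv α - 1 := B.len_eq_of_word h hm hmxm hhl
    (by rw [hxmα, hLh, B.level_neg_of_isPos hαpos, sub_zero]) hmlen.le
  have hlensh : (B.len (sref h) : ℝ) = 2 * B.htv h - 1 := B.len_eq_of_word h hs hsh hhl
    (by rw [sref_self, B.level_neg_of_isPos hhpos, hLh]; ring) hslen
  have hlensα : (B.len (sref α) : ℝ) = 2 * B.htv α - 1 := B.len_eq_of_word h ht htα hα
    (by rw [sref_self, B.level_neg_of_isPos hαpos, B.level_of_isPos hαpos]; ring) htlen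
  refine ⟨?_, hlenx, ?_, hlenxm⟩ <;> rify <;> linarith
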